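/- Let ℓ ≥ 1 be an integer and let v = (v₁, …, v_{2ℓ−1}) ∈ ℤ^{2ℓ−1}. Then the antisymmetric 2ℓ×2ℓ integer matrix [[S_{2ℓ−1}, v],[−vᵀ, 0]] is equivalent to the block-diagonal matrix with ℓ−1 diagonal blocks K₁ followed by the block K_s, where s = −Σ_{i=1}^{2ℓ−1} (−1)^i · v_i. -/
import Mathlib
set_option maxHeartbeats 2000000


open Matrix

/-- Entry of the antisymmetric matrix `S_N` whose entries above the diagonal are all `1`
(indices are 0-based naturals). -/
def SmatE (p q : ℕ) : ℤ := if p < q then 1 else if q < p then -1 else 0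

/-- The block-diagonal antisymmetric N×N matrix `D_N(n₁, …, n_k)` whose first diagonal
2×2 blocks are `K_{n₁}, …, K_{n_k}` (with `K_s = [[0,s],[-s,0]]`) and whose remaining
entries vanish. -/
def Dmat (N : ℕ) (ns : List ℤ) : Matrix (Fin N) (Fin N) ℤ :=
  Matrix.of fun i j =>
    if (j : ℕ) = (i : ℕ) + 1 ∧ (i : ℕ) % 2 = 0 then ns.getD ((i : ℕ) / 2) 0
    else if (i : ℕ) = (j : ℕ) + 1 ∧ (j : ℕ) % 2 = 0 then -(ns.getD ((j : ℕ) / 2) 0)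
    else 0

/-- Two integer matrices are equivalent if `B = T * A * Tᵀ` for some `T ∈ GL(N, ℤ)`. -/
def MatEquiv {n : Type*} [Fintype n] [DecidableEq n] (A B : Matrix n n ℤ) : Prop :=
  ∃ T : Matrix n n ℤ, IsUnit T.det ∧ B = T * A * Tᵀ

namespace SvAux
open Finset
lemma pow_parity {a b : ℕ} (h : a % 2 = b % 2) : ((-1:ℤ))^a = (-1)^b := by
  rcases Nat.even_or_odd a with ha | ha
  · have hb : Even b := by rw [Nat.even_iff] at *; omega
    rw [ha.neg_one_pow, hb.neg_one_pow]
  · have hb : Odd b := by rw [Nat.odd_iff] at *; omega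
    rw [ha.neg_one_pow, hb.neg_one_pow]
lemma pow_even {a : ℕ} (h : a % 2 = 0) : ((-1:ℤ))^a = 1 := by
  rw [(Nat.even_iff.mpr h).neg_one_pow]
lemma pow_odd {a : ℕ} (h : a % 2 = 1) : ((-1:ℤ))^a = -1 := by
  rw [(Nat.odd_iff.mpr h).neg_one_pow]
lemma sum_Ico_pow (a : ℕ) : ∀ b, a ≤ b →
    (∑ q ∈ Ico a b, ((-1:ℤ))^q) = if a % 2 = b % 2 then 0 else (-1)^a := by
  refine Nat.le_induction ?_ ?_
  · simp
  · intro b hb ih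
    rw [Finset.sum_Ico_succ_top hb, ih]
    by_cases h : a % 2 = b % 2
    · rw [if_pos h, if_neg (by omega), zero_add, pow_parity h]
    · rw [if_neg h, if_pos (by omega)]
      have : ((-1:ℤ))^b = -(-1)^a := by
        have := pow_parity (a := b) (b := a + 1) (by omega)
        rw [this, pow_succ]; ring
      rw [this]; ring
lemma sum_delta (N a : ℕ) (f : ℕ → ℤ) (h : a < N) :
    (∑ q ∈ range N, f q * (if q = a then 1 else 0)) = f a := by
  have : ∀ q ∈ range N, f q * (if q = a then 1 else 0) = if q = a then f q else 0 := by
    intro q _; by_cases hq : q = a <;> simp [hq]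
  rw [Finset.sum_congr rfl this, Finset.sum_ite_eq' (range N) a f, if_pos (mem_range.mpr h)]
lemma sum_delta2 (N a : ℕ) (f : ℕ → ℤ) (h : a + 1 < N) :
    (∑ q ∈ range N, f q * (if q = a then 1 else if q = a + 1 then -1 else 0)) = f a - f (a+1) := by
  have : ∀ q ∈ range N, f q * (if q = a then 1 else if q = a+1 then -1 else 0)
      = (if q = a then f q else 0) - (if q = a+1 then f q else 0) := by
    intro q _
    by_cases h1 : q = a
    · simp [h1, (by omega : a ≠ a + 1)]
    · by_cases h2 : q = a + 1 <;> simp [h1, h2]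
  rw [Finset.sum_congr rfl this, Finset.sum_sub_distrib,
    Finset.sum_ite_eq' (range N) a f, Finset.sum_ite_eq' (range N) (a+1) f,
    if_pos (mem_range.mpr (by omega)), if_pos (mem_range.mpr h)]
lemma sum_tail (N a b : ℕ) (f g : ℕ → ℤ) (hb : b < N) :
    (∑ q ∈ range N, f q * (if a ≤ q ∧ q ≤ b then g q else 0))
      = ∑ q ∈ Ico a (b+1), f q * g q := by
  rw [Finset.range_eq_Ico]
  rw [← Finset.sum_subset (Finset.Ico_subset_Ico (by omega) (by omega) :
        Ico a (b+1) ⊆ Ico 0 N)]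
  · refine Finset.sum_congr rfl fun q hq => ?_
    rw [mem_Ico] at hq
    rw [if_pos (by omega)]
  · intro q hq hq'
    rw [mem_Ico] at hq hq'
    rw [if_neg (by omega), mul_zero]
lemma sum_pair (M : ℕ) (f : ℕ → ℤ) :
    (∑ q ∈ range (2*M), f q) = ∑ k ∈ range M, (f (2*k) + f (2*k+1)) := by
  induction M with
  | zero => simp
  | succ M ih =>
    have : 2 * (M+1) = (2*M + 1) + 1 := by ring
    rw [this, Finset.sum_range_succ, Finset.sum_range_succ, ih, Finset.sum_range_succ]
    ring

section Defs
variable (m : ℕ) (w : ℕ → ℤ)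
def Sw (a b : ℕ) : ℤ := ∑ q ∈ Ico a b, (-1:ℤ)^q * w q
def AeN (p q : ℕ) : ℤ :=
  if p < 2*m+1 then (if q < 2*m+1 then SmatE p q else w p)
  else (if q < 2*m+1 then -(w q) else 0)
def UeN (i j : ℕ) : ℤ :=
  if 2*m ≤ i then (if j = i then 1 else 0)
  else if i % 2 = 0 then (if j = i then 1 else if j = i+1 then -1 else 0)
  else if i ≤ j ∧ j ≤ 2*m then (-1:ℤ)^(j+1) else 0
def CeN (p j : ℕ) : ℤ :=
  if j = 2*m+1 then (if p ≤ 2*m then w p else 0)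
  else if j = 2*m then (if p < 2*m then 1 else if p = 2*m then 0 else -(w (2*m)))
  else if j % 2 = 0 then
    (if p ≤ 2*m then (if p = j ∨ p = j+1 then -1 else 0) else w (j+1) - w j)
  else (if p ≤ 2*m then (if j ≤ p then -1 else 0) else Sw w j (2*m+1))
end Defs

variable {m : ℕ} {w : ℕ → ℤ}

lemma L1 (p j : ℕ) (hp : p ≤ 2*m+1) (hj : j ≤ 2*m+1) :
    (∑ q ∈ range (2*m+2), AeN m w p q * UeN m j q) = CeN m w p j := by
  by_cases hj2 : 2*m ≤ j
  · -- delta row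
    have hU : ∀ q, UeN m j q = if q = j then 1 else 0 := by
      intro q; rw [UeN, if_pos hj2]
    simp only [hU]
    rw [sum_delta _ j _ (by omega)]
    simp only [AeN, CeN, SmatE]
    split_ifs <;> first | rfl | ring1 | (exfalso; omega) | (subst_vars; first | rfl | ring1)
  · push_neg at hj2
    by_cases hje : j % 2 = 0
    · -- delta2 row
      have hU : ∀ q, UeN m j q = if q = j then 1 else if q = j+1 then -1 else 0 := by
        intro q; rw [UeN, if_neg (by omega), if_pos hje]
      simp only [hU]
      rw [sum_delta2 _ j _ (by omega)]
      simp only [AeN, CeN, SmatE]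
      split_ifs <;> first | rfl | ring1 | (exfalso; omega) | (subst_vars; first | rfl | ring1)
    · -- tail row
      have hU : ∀ q, UeN m j q = if j ≤ q ∧ q ≤ 2*m then (-1:ℤ)^(q+1) else 0 := by
        intro q; rw [UeN, if_neg (by omega), if_neg hje]
      simp only [hU]
      rw [sum_tail _ j (2*m) _ _ (by omega)]
      rw [CeN, if_neg (by omega), if_neg (by omega), if_neg hje]
      rcases (by omega : p ≤ 2*m ∨ p = 2*m+1) with hple | hpn
      · rw [if_pos hple]
        have hA : ∀ q ∈ Ico j (2*m+1), AeN m w p q * (-1:ℤ)^(q+1)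
            = SmatE p q * (-1:ℤ)^(q+1) := by
          intro q hq; rw [mem_Ico] at hq
          rw [AeN, if_pos (by omega), if_pos (by omega)]
        rw [Finset.sum_congr rfl hA]
        by_cases hjp : j ≤ p
        · rw [if_pos hjp]
          rw [← Finset.sum_Ico_consecutive _ hjp (by omega : p ≤ 2*m+1),
            ← Finset.sum_Ico_consecutive _ (by omega : p ≤ p+1) (by omega : p+1 ≤ 2*m+1)]
          have e1 : (∑ q ∈ Ico j p, SmatE p q * (-1:ℤ)^(q+1)) = ∑ q ∈ Ico j p, (-1:ℤ)^q := by
            refine Finset.sum_congr rfl fun q hq => ?_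
            rw [mem_Ico] at hq
            rw [SmatE, if_neg (by omega), if_pos (by omega), pow_succ]; ring
          have e2 : (∑ q ∈ Ico p (p+1), SmatE p q * (-1:ℤ)^(q+1)) = 0 := by
            rw [Finset.sum_Ico_succ_top le_rfl, Finset.Ico_self, Finset.sum_empty, SmatE,
              if_neg (by omega), if_neg (by omega)]; ring
          have e3 : (∑ q ∈ Ico (p+1) (2*m+1), SmatE p q * (-1:ℤ)^(q+1))
              = -∑ q ∈ Ico (p+1) (2*m+1), (-1:ℤ)^q := by
            rw [← Finset.sum_neg_distrib]
            refine Finset.sum_congr rfl fun q hq => ?_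
            rw [mem_Ico] at hq
            rw [SmatE, if_pos (by omega), pow_succ]; ring
          rw [e1, e2, e3, sum_Ico_pow _ _ hjp, sum_Ico_pow _ _ (by omega)]
          rcases (by omega : p % 2 = 0 ∨ p % 2 = 1) with hpe | hpe
          · rw [if_neg (by omega), if_pos (by omega), pow_odd (by omega)]; ring
          · rw [if_pos (by omega), if_neg (by omega), pow_even (by omega)]; ring
        · rw [if_neg hjp]
          have e1 : (∑ q ∈ Ico j (2*m+1), SmatE p q * (-1:ℤ)^(q+1))
              = -∑ q ∈ Ico j (2*m+1), (-1:ℤ)^q := by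
            rw [← Finset.sum_neg_distrib]
            refine Finset.sum_congr rfl fun q hq => ?_
            rw [mem_Ico] at hq
            rw [SmatE, if_pos (by omega), pow_succ]; ring
          rw [e1, sum_Ico_pow _ _ (by omega), if_pos (by omega)]; ring
      · subst hpn
        rw [if_neg (by omega), Sw]
        refine Finset.sum_congr rfl fun q hq => ?_
        rw [mem_Ico] at hq
        rw [AeN, if_neg (by omega), if_pos (by omega), pow_succ]; ring

lemma sum_delta' (N a : ℕ) (f : ℕ → ℤ) (h : a < N) :
    (∑ q ∈ range N, (if q = a then 1 else 0) * f q) = f a := by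
  rw [Finset.sum_congr rfl (fun q _ => mul_comm (if q = a then (1:ℤ) else 0) (f q))]
  exact sum_delta N a f h

lemma sum_delta2' (N a : ℕ) (f : ℕ → ℤ) (h : a + 1 < N) :
    (∑ q ∈ range N, (if q = a then 1 else if q = a + 1 then -1 else 0) * f q)
      = f a - f (a+1) := by
  rw [Finset.sum_congr rfl
    (fun q _ => mul_comm (if q = a then (1:ℤ) else if q = a+1 then -1 else 0) (f q))]
  exact sum_delta2 N a f h

lemma sum_tail' (N a b : ℕ) (f g : ℕ → ℤ) (hb : b < N) :
    (∑ q ∈ range N, (if a ≤ q ∧ q ≤ b then g q else 0) * f q)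
      = ∑ q ∈ Ico a (b+1), g q * f q := by
  rw [Finset.sum_congr rfl
    (fun q _ => mul_comm (if a ≤ q ∧ q ≤ b then g q else 0) (f q))]
  rw [sum_tail N a b f g hb]
  exact Finset.sum_congr rfl fun q _ => mul_comm _ _

def MeN (m : ℕ) (w : ℕ → ℤ) (i j : ℕ) : ℤ :=
  if i = 2*m+1 then
    (if j = 2*m+1 then 0 else if j = 2*m then -(w (2*m))
     else if j % 2 = 0 then w (j+1) - w j else Sw w j (2*m+1))
  else if i = 2*m then
    (if j = 2*m+1 then w (2*m) else if j = 2*m then 0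
     else if j % 2 = 1 then -1 else 0)
  else if i % 2 = 0 then
    (if j = i+1 then 1 else if j = 2*m+1 then w i - w (i+1) else 0)
  else
    (if j + 1 = i then -1 else if j = 2*m then 1
     else if j = 2*m+1 then -(Sw w i (2*m+1)) else 0)

lemma L2 (i j : ℕ) (hi : i ≤ 2*m+1) (hj : j ≤ 2*m+1) :
    (∑ p ∈ range (2*m+2), UeN m i p * CeN m w p j) = MeN m w i j := by
  by_cases hi2 : 2*m ≤ i
  · have hU : ∀ p, UeN m i p = if p = i then 1 else 0 := by
      intro p; rw [UeN, if_pos hi2]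
    simp only [hU]
    rw [sum_delta' _ i _ (by omega)]
    simp only [CeN, MeN]
    split_ifs <;> first | rfl | ring1 | (exfalso; omega) | (subst_vars; first | rfl | ring1)
  · push_neg at hi2
    by_cases hie : i % 2 = 0
    · have hU : ∀ p, UeN m i p = if p = i then 1 else if p = i+1 then -1 else 0 := by
        intro p; rw [UeN, if_neg (by omega), if_pos hie]
      simp only [hU]
      rw [sum_delta2' _ i _ (by omega)]
      simp only [CeN, MeN]
      split_ifs <;> first | rfl | ring1 | (exfalso; omega) | (subst_vars; first | rfl | ring1)
    · have hU : ∀ p, UeN m i p = if i ≤ p ∧ p ≤ 2*m then (-1:ℤ)^(p+1) else 0 := by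
        intro p; rw [UeN, if_neg (by omega), if_neg hie]
      simp only [hU]
      rw [sum_tail' _ i (2*m) _ _ (by omega)]
      by_cases hj1 : j = 2*m+1
      · subst hj1
        have hM : MeN m w i (2*m+1) = -(Sw w i (2*m+1)) := by
          rw [MeN, if_neg (by omega), if_neg (by omega), if_neg hie, if_neg (by omega),
            if_neg (by omega), if_pos rfl]
        rw [hM, Sw, ← Finset.sum_neg_distrib]
        refine Finset.sum_congr rfl fun p hp => ?_
        rw [mem_Ico] at hp
        rw [CeN, if_pos rfl, if_pos (by omega), pow_succ]; ring
      · by_cases hj2 : j = 2*m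
        · subst hj2
          have hM : MeN m w i (2*m) = 1 := by
            rw [MeN, if_neg (by omega), if_neg (by omega), if_neg hie, if_neg (by omega),
              if_pos rfl]
          rw [hM, Finset.sum_Ico_succ_top (by omega : i ≤ 2*m)]
          have e0 : CeN m w (2*m) (2*m) = 0 := by
            rw [CeN, if_neg (by omega), if_pos rfl, if_neg (by omega), if_pos rfl]
          rw [e0, mul_zero, add_zero]
          have e1 : ∀ p ∈ Ico i (2*m), (-1:ℤ)^(p+1) * CeN m w p (2*m) = -((-1:ℤ)^p) := by
            intro p hp; rw [mem_Ico] at hp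
            rw [CeN, if_neg (by omega), if_pos rfl, if_pos (by omega), pow_succ]; ring
          rw [Finset.sum_congr rfl e1, Finset.sum_neg_distrib,
            sum_Ico_pow _ _ (by omega : i ≤ 2*m), if_neg (by omega), pow_odd (by omega)]
          ring
        · by_cases hje : j % 2 = 0
          · -- j even < 2m
            have hjlt : j < 2*m := by omega
            have hM : MeN m w i j = if j + 1 = i then -1 else 0 := by
              rw [MeN, if_neg (by omega), if_neg (by omega), if_neg hie]
              split_ifs <;> first | rfl | (exfalso; omega)
            have e1 : ∀ p ∈ Ico i (2*m+1), (-1:ℤ)^(p+1) * CeN m w p j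
                = (if p = j then (-1:ℤ) * (-1)^(p+1) else 0)
                  + (if p = j+1 then (-1:ℤ) * (-1)^(p+1) else 0) := by
              intro p hp; rw [mem_Ico] at hp
              rw [CeN, if_neg (by omega), if_neg (by omega), if_pos hje, if_pos (by omega)]
              by_cases h1 : p = j
              · rw [if_pos (Or.inl h1), if_pos h1, if_neg (by omega)]; ring
              · by_cases h2 : p = j + 1
                · rw [if_pos (Or.inr h2), if_neg h1, if_pos h2]; ring
                · rw [if_neg (by tauto), if_neg h1, if_neg h2]; ring
            rw [Finset.sum_congr rfl e1, Finset.sum_add_distrib,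
              Finset.sum_ite_eq' (Ico i (2*m+1)) j (fun p => (-1:ℤ) * (-1)^(p+1)),
              Finset.sum_ite_eq' (Ico i (2*m+1)) (j+1) (fun p => (-1:ℤ) * (-1)^(p+1)),
              hM]
            have p1 : (-1:ℤ) * (-1)^(j+1) = 1 := by rw [pow_odd (by omega)]; ring
            have p2 : (-1:ℤ) * (-1)^(j+1+1) = -1 := by rw [pow_even (by omega)]; ring
            rw [p1, p2]
            simp only [Finset.mem_Ico]
            split_ifs <;> first | ring1 | (exfalso; omega)
          · -- j odd < 2m
            have hjlt : j < 2*m := by omega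
            have hM : MeN m w i j = 0 := by
              rw [MeN, if_neg (by omega), if_neg (by omega), if_neg hie, if_neg (by omega),
                if_neg (by omega), if_neg (by omega)]
            rw [hM]
            by_cases hji : j ≤ i
            · have e1 : ∀ p ∈ Ico i (2*m+1), (-1:ℤ)^(p+1) * CeN m w p j = (-1:ℤ)^p := by
                intro p hp; rw [mem_Ico] at hp
                rw [CeN, if_neg (by omega), if_neg (by omega), if_neg hje, if_pos (by omega),
                  if_pos (by omega), pow_succ]; ring
              rw [Finset.sum_congr rfl e1,
                sum_Ico_pow _ _ (by omega : i ≤ 2*m+1), if_pos (by omega)]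
            · push_neg at hji
              rw [← Finset.sum_Ico_consecutive _ (by omega : i ≤ j) (by omega : j ≤ 2*m+1)]
              have e1 : ∀ p ∈ Ico i j, (-1:ℤ)^(p+1) * CeN m w p j = 0 := by
                intro p hp; rw [mem_Ico] at hp
                rw [CeN, if_neg (by omega), if_neg (by omega), if_neg hje, if_pos (by omega),
                  if_neg (by omega)]; ring
              have e2 : ∀ p ∈ Ico j (2*m+1), (-1:ℤ)^(p+1) * CeN m w p j = (-1:ℤ)^p := by
                intro p hp; rw [mem_Ico] at hp
                rw [CeN, if_neg (by omega), if_neg (by omega), if_neg hje, if_pos (by omega),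
                  if_pos (by omega), pow_succ]; ring
              rw [Finset.sum_congr rfl e1, Finset.sum_congr rfl e2, Finset.sum_const_zero,
                sum_Ico_pow _ _ (by omega : j ≤ 2*m+1), if_pos (by omega)]
              ring

def LeN (m : ℕ) (w : ℕ → ℤ) (i q : ℕ) : ℤ :=
  if i = 2*m then (if q % 2 = 0 ∧ q ≤ 2*m then 1 else 0)
  else if i = 2*m+1 then
    (if q = 2*m+1 then 1 else if q = 2*m then 0
     else if q % 2 = 0 then -(Sw w (q+1) (2*m+1)) else w q - w (q-1))
  else (if q = i then 1 else 0)

def PeN (m : ℕ) (w : ℕ → ℤ) (i j : ℕ) : ℤ :=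
  if j = 2*m then (if i = 2*m+1 then -(Sw w 0 (2*m+1)) else 0)
  else if j = 2*m+1 then (if i = 2*m then Sw w 0 (2*m+1) else 0)
  else MeN m w i j

lemma SwEven : Sw w 0 (2*m) = ∑ k ∈ range m, (w (2*k) - w (2*k+1)) := by
  rw [Sw, ← Finset.range_eq_Ico, sum_pair]
  refine Finset.sum_congr rfl fun k _ => ?_
  rw [pow_even (by omega), pow_odd (by omega)]
  ring

lemma SwTop : Sw w 0 (2*m+1) = Sw w 0 (2*m) + w (2*m) := by
  rw [Sw, Sw, Finset.sum_Ico_succ_top (by omega), pow_even (by omega), one_mul]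

lemma L3 (i j : ℕ) (hi : i ≤ 2*m+1) (hj : j ≤ 2*m+1) :
    (∑ q ∈ range (2*m+2), MeN m w i q * LeN m w j q) = PeN m w i j := by
  have h22 : 2*m+2 = 2*(m+1) := by ring
  by_cases hj0 : j < 2*m
  · have hL : ∀ q, LeN m w j q = if q = j then 1 else 0 := by
      intro q; rw [LeN, if_neg (by omega), if_neg (by omega)]
    simp only [hL]
    rw [sum_delta _ j _ (by omega), PeN, if_neg (by omega), if_neg (by omega)]
  · rcases (by omega : j = 2*m ∨ j = 2*m+1) with rfl | rfl
    · -- j = 2m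
      rw [h22, sum_pair]
      have e0 : ∀ k ∈ range (m+1),
          MeN m w i (2*k) * LeN m w (2*m) (2*k) + MeN m w i (2*k+1) * LeN m w (2*m) (2*k+1)
          = MeN m w i (2*k) := by
        intro k hk; rw [mem_range] at hk
        rw [LeN, if_pos rfl, if_pos (show (2*k) % 2 = 0 ∧ 2*k ≤ 2*m by omega),
          LeN, if_pos rfl, if_neg (by omega), mul_one, mul_zero, add_zero]
      rw [Finset.sum_congr rfl e0]
      rw [PeN, if_pos rfl]
      rcases (by omega : i = 2*m+1 ∨ i = 2*m ∨ (i < 2*m ∧ i % 2 = 0) ∨ (i < 2*m ∧ i % 2 = 1))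
        with rfl | rfl | ⟨hi0, hie⟩ | ⟨hi0, hie⟩
      · -- i = 2m+1
        rw [if_pos rfl, Finset.sum_range_succ]
        have e1 : ∀ k ∈ range m, MeN m w (2*m+1) (2*k) = -(w (2*k) - w (2*k+1)) := by
          intro k hk; rw [mem_range] at hk
          simp only [MeN]
          split_ifs <;> first | rfl | ring1 | (exfalso; omega)
        have e2 : MeN m w (2*m+1) (2*m) = -(w (2*m)) := by
          simp only [MeN]
          split_ifs <;> first | rfl | ring1 | (exfalso; omega)
        rw [Finset.sum_congr rfl e1, e2, Finset.sum_neg_distrib, ← SwEven, SwTop]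
        ring
      · -- i = 2m
        rw [if_neg (by omega)]
        refine Finset.sum_eq_zero fun k hk => ?_
        rw [mem_range] at hk
        simp only [MeN]
        split_ifs <;> first | rfl | (exfalso; omega)
      · -- i even < 2m
        rw [if_neg (by omega)]
        refine Finset.sum_eq_zero fun k hk => ?_
        rw [mem_range] at hk
        simp only [MeN]
        split_ifs <;> first | rfl | (exfalso; omega)
      · -- i odd < 2m
        rw [if_neg (by omega)]
        have e1 : ∀ k ∈ range (m+1), MeN m w i (2*k)
            = (if k = (i-1)/2 then -1 else 0) + (if k = m then 1 else 0) := by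
          intro k hk; rw [mem_range] at hk
          simp only [MeN]
          split_ifs <;> first | rfl | ring1 | (exfalso; omega)
        rw [Finset.sum_congr rfl e1, Finset.sum_add_distrib,
          Finset.sum_ite_eq' (range (m+1)) ((i-1)/2) (fun _ => (-1:ℤ)),
          Finset.sum_ite_eq' (range (m+1)) m (fun _ => (1:ℤ)),
          if_pos (mem_range.mpr (by omega)), if_pos (mem_range.mpr (by omega))]
        ring
    · -- j = 2m+1
      rw [h22, sum_pair]
      rw [PeN, if_neg (by omega), if_pos rfl]
      rcases (by omega : i = 2*m+1 ∨ i = 2*m ∨ (i < 2*m ∧ i % 2 = 0) ∨ (i < 2*m ∧ i % 2 = 1))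
        with rfl | rfl | ⟨hi0, hie⟩ | ⟨hi0, hie⟩
      · -- i = 2m+1
        rw [if_neg (by omega)]
        refine Finset.sum_eq_zero fun k hk => ?_
        rw [mem_range] at hk
        simp only [MeN, LeN, Nat.add_sub_cancel]
        split_ifs <;> first | rfl | ring1 | (exfalso; omega)
      · -- i = 2m
        rw [if_pos rfl, Finset.sum_range_succ]
        have e1 : ∀ k ∈ range m,
            MeN m w (2*m) (2*k) * LeN m w (2*m+1) (2*k)
              + MeN m w (2*m) (2*k+1) * LeN m w (2*m+1) (2*k+1)
            = w (2*k) - w (2*k+1) := by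
          intro k hk; rw [mem_range] at hk
          simp only [MeN, LeN, Nat.add_sub_cancel]
          split_ifs <;> first | rfl | ring1 | (exfalso; omega)
        have e2 : MeN m w (2*m) (2*m) * LeN m w (2*m+1) (2*m)
              + MeN m w (2*m) (2*m+1) * LeN m w (2*m+1) (2*m+1)
            = w (2*m) := by
          simp only [MeN, LeN, Nat.add_sub_cancel]
          split_ifs <;> first | rfl | ring1 | (exfalso; omega)
        rw [Finset.sum_congr rfl e1, e2, ← SwEven, SwTop]
      · -- i even < 2m
        rw [if_neg (by omega)]
        have e1 : ∀ k ∈ range (m+1),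
            MeN m w i (2*k) * LeN m w (2*m+1) (2*k)
              + MeN m w i (2*k+1) * LeN m w (2*m+1) (2*k+1)
            = (if k = i/2 then w (i+1) - w i else 0)
              + (if k = m then w i - w (i+1) else 0) := by
          intro k hk; rw [mem_range] at hk
          have f1 : MeN m w i (2*k) = 0 := by
            simp only [MeN]; split_ifs <;> first | rfl | (exfalso; omega)
          rw [f1, zero_mul, zero_add]
          rcases (by omega : k = m ∨ (k < m ∧ 2*k+1 = i+1) ∨ (k < m ∧ 2*k+1 ≠ i+1))
            with hkm0 | ⟨hkm, hki⟩ | ⟨hkm, hki⟩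
          · rw [hkm0]
            have f2 : MeN m w i (2*m+1) = w i - w (i+1) := by
              simp only [MeN]; split_ifs <;> first | rfl | (exfalso; omega)
            have f3 : LeN m w (2*m+1) (2*m+1) = 1 := by
              simp only [LeN]; split_ifs <;> first | rfl | (exfalso; omega)
            rw [f2, f3, if_neg (by omega), if_pos rfl]
            ring
          · have hik : i = 2*k := by omega
            subst hik
            have f2 : MeN m w (2*k) (2*k+1) = 1 := by
              simp only [MeN]; split_ifs <;> first | rfl | (exfalso; omega)
            have f3 : LeN m w (2*m+1) (2*k+1) = w (2*k+1) - w (2*k) := by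
              simp only [LeN, Nat.add_sub_cancel]
              split_ifs <;> first | rfl | (exfalso; omega)
            rw [f2, f3, if_pos (by omega), if_neg (by omega)]
            ring
          · have f2 : MeN m w i (2*k+1) = 0 := by
              simp only [MeN]; split_ifs <;> first | rfl | (exfalso; omega)
            rw [f2, zero_mul, if_neg (by omega), if_neg (by omega)]
            ring
        rw [Finset.sum_congr rfl e1, Finset.sum_add_distrib,
          Finset.sum_ite_eq' (range (m+1)) (i/2) (fun _ => w (i+1) - w i),
          Finset.sum_ite_eq' (range (m+1)) m (fun _ => w i - w (i+1)),
          if_pos (mem_range.mpr (by omega)), if_pos (mem_range.mpr (by omega))]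
        ring
      · -- i odd < 2m
        rw [if_neg (by omega)]
        have e1 : ∀ k ∈ range (m+1),
            MeN m w i (2*k) * LeN m w (2*m+1) (2*k)
              + MeN m w i (2*k+1) * LeN m w (2*m+1) (2*k+1)
            = (if k = (i-1)/2 then Sw w i (2*m+1) else 0)
              + (if k = m then -(Sw w i (2*m+1)) else 0) := by
          intro k hk; rw [mem_range] at hk
          rcases (by omega : k = m ∨ (k < m ∧ 2*k+1 = i) ∨ (k < m ∧ 2*k+1 ≠ i))
            with hkm0 | ⟨hkm, hki⟩ | ⟨hkm, hki⟩
          · rw [hkm0]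
            have f1 : MeN m w i (2*m+1) = -(Sw w i (2*m+1)) := by
              simp only [MeN]; split_ifs <;> first | rfl | (exfalso; omega)
            have g : LeN m w (2*m+1) (2*m) = 0 := by
              simp only [LeN]; split_ifs <;> first | rfl | (exfalso; omega)
            have f3 : LeN m w (2*m+1) (2*m+1) = 1 := by
              simp only [LeN]; split_ifs <;> first | rfl | (exfalso; omega)
            rw [f1, g, f3, mul_zero, if_neg (by omega), if_pos rfl]
            ring
          · have f1 : MeN m w i (2*k+1) = if 2*k+1 = 2*m+1 then -(Sw w i (2*m+1)) else 0 := by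
              simp only [MeN]; split_ifs <;> first | rfl | (exfalso; omega)
            have hik : i = 2*k+1 := by omega
            subst hik
            have f2 : MeN m w (2*k+1) (2*k) = -1 := by
              simp only [MeN]; split_ifs <;> first | rfl | (exfalso; omega)
            have f3 : LeN m w (2*m+1) (2*k) = -(Sw w (2*k+1) (2*m+1)) := by
              simp only [LeN]; split_ifs <;> first | rfl | (exfalso; omega)
            rw [f1, f2, f3, if_neg (by omega), if_pos (by omega), if_neg (by omega)]
            ring
          · have f1 : MeN m w i (2*k+1) = if 2*k+1 = 2*m+1 then -(Sw w i (2*m+1)) else 0 := by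
              simp only [MeN]; split_ifs <;> first | rfl | (exfalso; omega)
            have f2 : MeN m w i (2*k) = 0 := by
              simp only [MeN]; split_ifs <;> first | rfl | (exfalso; omega)
            rw [f1, f2, zero_mul, if_neg (by omega), if_neg (by omega), if_neg (by omega)]
            ring
        rw [Finset.sum_congr rfl e1, Finset.sum_add_distrib,
          Finset.sum_ite_eq' (range (m+1)) ((i-1)/2) (fun _ => Sw w i (2*m+1)),
          Finset.sum_ite_eq' (range (m+1)) m (fun _ => -(Sw w i (2*m+1))),
          if_pos (mem_range.mpr (by omega)), if_pos (mem_range.mpr (by omega))]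
        ring

def NeN (m : ℕ) (w : ℕ → ℤ) (i j : ℕ) : ℤ :=
  if i % 2 = 0 ∧ j = i+1 ∧ i < 2*m then 1
  else if j % 2 = 0 ∧ i = j+1 ∧ j < 2*m then -1
  else if i = 2*m ∧ j = 2*m+1 then Sw w 0 (2*m+1)
  else if i = 2*m+1 ∧ j = 2*m then -(Sw w 0 (2*m+1))
  else 0

lemma L4 (i j : ℕ) (hi : i ≤ 2*m+1) (hj : j ≤ 2*m+1) :
    (∑ q ∈ range (2*m+2), LeN m w i q * PeN m w q j) = NeN m w i j := by
  have h22 : 2*m+2 = 2*(m+1) := by ring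
  rcases (by omega : i < 2*m ∨ i = 2*m ∨ i = 2*m+1) with hi0 | rfl | rfl
  · -- i < 2m : delta row
    have hL : ∀ q, LeN m w i q = if q = i then 1 else 0 := by
      intro q; rw [LeN, if_neg (by omega), if_neg (by omega)]
    simp only [hL]
    rw [sum_delta' _ i _ (by omega)]
    simp only [PeN, MeN, NeN]
    split_ifs <;> first | rfl | ring1 | (exfalso; omega)
  · -- i = 2m
    rw [h22, sum_pair]
    have e0 : ∀ k ∈ range (m+1),
        LeN m w (2*m) (2*k) * PeN m w (2*k) j + LeN m w (2*m) (2*k+1) * PeN m w (2*k+1) j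
        = PeN m w (2*k) j := by
      intro k hk; rw [mem_range] at hk
      rw [LeN, if_pos rfl, if_pos (show (2*k) % 2 = 0 ∧ 2*k ≤ 2*m by omega),
        LeN, if_pos rfl, if_neg (by omega), one_mul, zero_mul, add_zero]
    rw [Finset.sum_congr rfl e0]
    rcases (by omega : j = 2*m+1 ∨ j = 2*m ∨ (j < 2*m ∧ j % 2 = 1) ∨ (j < 2*m ∧ j % 2 = 0))
      with rfl | rfl | ⟨hj0, hje⟩ | ⟨hj0, hje⟩
    · -- j = 2m+1
      have e1 : ∀ k ∈ range (m+1), PeN m w (2*k) (2*m+1)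
          = if k = m then Sw w 0 (2*m+1) else 0 := by
        intro k hk; rw [mem_range] at hk
        simp only [PeN]; split_ifs <;> first | rfl | (exfalso; omega)
      rw [Finset.sum_congr rfl e1,
        Finset.sum_ite_eq' (range (m+1)) m (fun _ => Sw w 0 (2*m+1)),
        if_pos (mem_range.mpr (by omega))]
      rw [NeN, if_neg (by omega), if_neg (by omega), if_pos ⟨rfl, rfl⟩]
    · -- j = 2m
      rw [NeN, if_neg (by omega), if_neg (by omega), if_neg (by omega), if_neg (by omega)]
      refine Finset.sum_eq_zero fun k hk => ?_
      rw [mem_range] at hk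
      simp only [PeN]; split_ifs <;> first | rfl | (exfalso; omega)
    · -- j odd < 2m
      have hP : ∀ q, PeN m w q j = MeN m w q j := by
        intro q; rw [PeN, if_neg (by omega), if_neg (by omega)]
      have e1 : ∀ k ∈ range (m+1), PeN m w (2*k) j
          = (if k = (j-1)/2 then 1 else 0) + (if k = m then -1 else 0) := by
        intro k hk; rw [mem_range] at hk
        rw [hP]
        simp only [MeN]; split_ifs <;> first | rfl | ring1 | (exfalso; omega)
      rw [Finset.sum_congr rfl e1, Finset.sum_add_distrib,
        Finset.sum_ite_eq' (range (m+1)) ((j-1)/2) (fun _ => (1:ℤ)),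
        Finset.sum_ite_eq' (range (m+1)) m (fun _ => (-1:ℤ)),
        if_pos (mem_range.mpr (by omega)), if_pos (mem_range.mpr (by omega))]
      rw [NeN, if_neg (by omega), if_neg (by omega), if_neg (by omega), if_neg (by omega)]
      ring
    · -- j even < 2m
      have hP : ∀ q, PeN m w q j = MeN m w q j := by
        intro q; rw [PeN, if_neg (by omega), if_neg (by omega)]
      rw [NeN, if_neg (by omega), if_neg (by omega), if_neg (by omega), if_neg (by omega)]
      refine Finset.sum_eq_zero fun k hk => ?_
      rw [mem_range] at hk
      rw [hP]
      simp only [MeN]; split_ifs <;> first | rfl | (exfalso; omega)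
  · -- i = 2m+1
    rw [h22, sum_pair]
    have hLm : LeN m w (2*m+1) (2*m) = 0 := by
      simp only [LeN]; split_ifs <;> first | rfl | (exfalso; omega)
    have hLt : LeN m w (2*m+1) (2*m+1) = 1 := by
      simp only [LeN]; split_ifs <;> first | rfl | (exfalso; omega)
    have hL0 : ∀ k, k < m → LeN m w (2*m+1) (2*k) = -(Sw w (2*k+1) (2*m+1)) := by
      intro k hk
      simp only [LeN]; split_ifs <;> first | rfl | (exfalso; omega)
    have hL1 : ∀ k, k < m → LeN m w (2*m+1) (2*k+1) = w (2*k+1) - w (2*k) := by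
      intro k hk
      simp only [LeN, Nat.add_sub_cancel]; split_ifs <;> first | rfl | (exfalso; omega)
    rcases (by omega : j = 2*m+1 ∨ j = 2*m ∨ (j < 2*m ∧ j % 2 = 1) ∨ (j < 2*m ∧ j % 2 = 0))
      with rfl | rfl | ⟨hj0, hje⟩ | ⟨hj0, hje⟩
    · -- j = 2m+1
      rw [NeN, if_neg (by omega), if_neg (by omega), if_neg (by omega), if_neg (by omega)]
      refine Finset.sum_eq_zero fun k hk => ?_
      rw [mem_range] at hk
      have p0 : ∀ q, q ≤ 2*m+1 → PeN m w q (2*m+1) = if q = 2*m then Sw w 0 (2*m+1) else 0 := by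
        intro q hq
        simp only [PeN]; split_ifs <;> first | rfl | (exfalso; omega)
      rcases (by omega : k = m ∨ k < m) with hkm0 | hkm
      · rw [hkm0, hLm, hLt, p0 (2*m) (by omega), p0 (2*m+1) (by omega),
          if_pos rfl, if_neg (by omega)]
        ring
      · rw [hL0 k hkm, hL1 k hkm, p0 (2*k) (by omega), p0 (2*k+1) (by omega),
          if_neg (by omega), if_neg (by omega)]
        ring
    · -- j = 2m
      rw [NeN, if_neg (by omega), if_neg (by omega), if_neg (by omega), if_pos ⟨rfl, rfl⟩]
      have p0 : ∀ q, q ≤ 2*m+1 → PeN m w q (2*m)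
          = if q = 2*m+1 then -(Sw w 0 (2*m+1)) else 0 := by
        intro q hq
        simp only [PeN]; split_ifs <;> first | rfl | (exfalso; omega)
      have e1 : ∀ k ∈ range (m+1),
          LeN m w (2*m+1) (2*k) * PeN m w (2*k) (2*m)
            + LeN m w (2*m+1) (2*k+1) * PeN m w (2*k+1) (2*m)
          = if k = m then -(Sw w 0 (2*m+1)) else 0 := by
        intro k hk; rw [mem_range] at hk
        rcases (by omega : k = m ∨ k < m) with hkm0 | hkm
        · rw [hkm0, hLm, hLt, p0 (2*m) (by omega), p0 (2*m+1) (by omega),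
            if_neg (by omega), if_pos rfl, if_pos rfl]
          ring
        · rw [hL0 k hkm, hL1 k hkm, p0 (2*k) (by omega), p0 (2*k+1) (by omega),
            if_neg (by omega), if_neg (by omega), if_neg (by omega)]
          ring
      rw [Finset.sum_congr rfl e1,
        Finset.sum_ite_eq' (range (m+1)) m (fun _ => -(Sw w 0 (2*m+1))),
        if_pos (mem_range.mpr (by omega))]
    · -- j odd < 2m
      have hP : ∀ q, PeN m w q j = MeN m w q j := by
        intro q; rw [PeN, if_neg (by omega), if_neg (by omega)]
      rw [NeN, if_neg (by omega), if_neg (by omega), if_neg (by omega), if_neg (by omega)]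
      have e1 : ∀ k ∈ range (m+1),
          LeN m w (2*m+1) (2*k) * PeN m w (2*k) j
            + LeN m w (2*m+1) (2*k+1) * PeN m w (2*k+1) j
          = (if k = (j-1)/2 then -(Sw w j (2*m+1)) else 0)
            + (if k = m then Sw w j (2*m+1) else 0) := by
        intro k hk; rw [mem_range] at hk
        rw [hP, hP]
        rcases (by omega : k = m ∨ (k < m ∧ 2*k+1 = j) ∨ (k < m ∧ 2*k+1 ≠ j))
          with hkm0 | ⟨hkm, hkj⟩ | ⟨hkm, hkj⟩
        · rw [hkm0]
          have f1 : MeN m w (2*m+1) j = Sw w j (2*m+1) := by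
            simp only [MeN]; split_ifs <;> first | rfl | (exfalso; omega)
          rw [hLm, hLt, f1, if_neg (by omega), if_pos rfl]
          ring
        · have hjk : j = 2*k+1 := by omega
          subst hjk
          have f1 : MeN m w (2*k) (2*k+1) = 1 := by
            simp only [MeN]; split_ifs <;> first | rfl | (exfalso; omega)
          have f2 : MeN m w (2*k+1) (2*k+1) = 0 := by
            simp only [MeN]; split_ifs <;> first | rfl | (exfalso; omega)
          rw [hL0 k hkm, hL1 k hkm, f1, f2, if_pos (by omega), if_neg (by omega)]
          ring
        · have f1 : MeN m w (2*k) j = 0 := by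
            simp only [MeN]; split_ifs <;> first | rfl | (exfalso; omega)
          have f2 : MeN m w (2*k+1) j = 0 := by
            simp only [MeN]; split_ifs <;> first | rfl | (exfalso; omega)
          rw [f1, f2, if_neg (by omega), if_neg (by omega)]
          ring
      rw [Finset.sum_congr rfl e1, Finset.sum_add_distrib,
        Finset.sum_ite_eq' (range (m+1)) ((j-1)/2) (fun _ => -(Sw w j (2*m+1))),
        Finset.sum_ite_eq' (range (m+1)) m (fun _ => Sw w j (2*m+1)),
        if_pos (mem_range.mpr (by omega)), if_pos (mem_range.mpr (by omega))]
      ring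
    · -- j even < 2m
      have hP : ∀ q, PeN m w q j = MeN m w q j := by
        intro q; rw [PeN, if_neg (by omega), if_neg (by omega)]
      rw [NeN, if_neg (by omega), if_neg (by omega), if_neg (by omega), if_neg (by omega)]
      have e1 : ∀ k ∈ range (m+1),
          LeN m w (2*m+1) (2*k) * PeN m w (2*k) j
            + LeN m w (2*m+1) (2*k+1) * PeN m w (2*k+1) j
          = (if k = j/2 then -(w (j+1) - w j) else 0)
            + (if k = m then w (j+1) - w j else 0) := by
        intro k hk; rw [mem_range] at hk
        rw [hP, hP]
        rcases (by omega : k = m ∨ (k < m ∧ 2*k = j) ∨ (k < m ∧ 2*k ≠ j))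
          with hkm0 | ⟨hkm, hkj⟩ | ⟨hkm, hkj⟩
        · rw [hkm0]
          have f1 : MeN m w (2*m+1) j = w (j+1) - w j := by
            simp only [MeN]; split_ifs <;> first | rfl | (exfalso; omega)
          rw [hLm, hLt, f1, if_neg (by omega), if_pos rfl]
          ring
        · have hjk : j = 2*k := by omega
          subst hjk
          have f1 : MeN m w (2*k) (2*k) = 0 := by
            simp only [MeN]; split_ifs <;> first | rfl | (exfalso; omega)
          have f2 : MeN m w (2*k+1) (2*k) = -1 := by
            simp only [MeN]; split_ifs <;> first | rfl | (exfalso; omega)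
          rw [hL0 k hkm, hL1 k hkm, f1, f2, if_pos (by omega), if_neg (by omega)]
          ring
        · have f1 : MeN m w (2*k) j = 0 := by
            simp only [MeN]; split_ifs <;> first | rfl | (exfalso; omega)
          have f2 : MeN m w (2*k+1) j = 0 := by
            simp only [MeN]; split_ifs <;> first | rfl | (exfalso; omega)
          rw [f1, f2, if_neg (by omega), if_neg (by omega)]
          ring
      rw [Finset.sum_congr rfl e1, Finset.sum_add_distrib,
        Finset.sum_ite_eq' (range (m+1)) (j/2) (fun _ => -(w (j+1) - w j)),
        Finset.sum_ite_eq' (range (m+1)) m (fun _ => w (j+1) - w j),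
        if_pos (mem_range.mpr (by omega)), if_pos (mem_range.mpr (by omega))]
      ring

lemma g1 (a k : ℕ) (x y : ℤ) (h : k < a) : (List.replicate a x ++ [y]).getD k 0 = x := by
  rw [List.getD_append _ _ _ _ (by simpa using h)]
  simp [List.getD_eq_getElem?_getD, h]

lemma g2 (a : ℕ) (x y : ℤ) : (List.replicate a x ++ [y]).getD a 0 = y := by
  rw [List.getD_append_right _ _ _ _ (by simp)]
  simp

lemma detU (N : ℕ) (hN : N = 2*m+2) :
    (Matrix.of fun i j : Fin N => UeN m (i:ℕ) (j:ℕ)).det = 1 := by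
  rw [Matrix.det_of_upperTriangular]
  · apply Finset.prod_eq_one
    intro i _
    have hi : (i:ℕ) < 2*m+2 := hN ▸ i.isLt
    simp only [Matrix.of_apply, UeN]
    split_ifs <;> first | rfl | (exfalso; omega) | (rw [pow_even (by omega)])
  · intro i j hij
    have hji : (j:ℕ) < (i:ℕ) := hij
    simp only [Matrix.of_apply, UeN]
    split_ifs <;> first | rfl | (exfalso; omega)

lemma detL (N : ℕ) (hN : N = 2*m+2) :
    (Matrix.of fun i j : Fin N => LeN m w (i:ℕ) (j:ℕ)).det = 1 := by
  rw [Matrix.det_of_lowerTriangular]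
  · apply Finset.prod_eq_one
    intro i _
    simp only [Matrix.of_apply, LeN]
    split_ifs <;> first | rfl | (exfalso; omega)
  · intro i j hij
    have hij' : (i:ℕ) < (j:ℕ) := hij
    have hj : (j:ℕ) < 2*m+2 := hN ▸ j.isLt
    simp only [Matrix.of_apply, LeN]
    split_ifs <;> first | rfl | (exfalso; omega)

end SvAux

open SvAux

/-- for any `v ∈ ℤ^{2ℓ-1}`, the antisymmetric 2ℓ×2ℓ matrix
`[[S_{2ℓ-1}, v], [-vᵀ, 0]]` is equivalent to the block-diagonal matrix with `ℓ-1`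
blocks `K₁` followed by `K_s`, where `s = -∑_{i=1}^{2ℓ-1} (-1)^i v_i`
(in 0-based indexing, `s = ∑_p (-1)^p v_p`). -/
theorem Sv_matrix_equiv (ℓ : ℕ) (hℓ : 1 ≤ ℓ) (v : Fin (2 * ℓ - 1) → ℤ) :
    MatEquiv
      (Matrix.of fun i j : Fin (2 * ℓ) =>
        if h : (i : ℕ) < 2 * ℓ - 1 then
          (if h' : (j : ℕ) < 2 * ℓ - 1 then SmatE (i : ℕ) (j : ℕ) else v ⟨i, h⟩)
        else
          (if h' : (j : ℕ) < 2 * ℓ - 1 then -(v ⟨j, h'⟩) else 0))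
      (Dmat (2 * ℓ)
        (List.replicate (ℓ - 1) (1 : ℤ) ++ [∑ p : Fin (2 * ℓ - 1), (-1) ^ (p : ℕ) * v p])) := by
  obtain ⟨m, rfl⟩ : ∃ m, ℓ = m + 1 := ⟨ℓ - 1, by omega⟩
  have hN : 2*(m+1) = 2*m+2 := by ring
  have hn : 2*(m+1) - 1 = 2*m+1 := by omega
  set w : ℕ → ℤ := fun p => if h : p < 2*(m+1) - 1 then v ⟨p, h⟩ else 0 with hwdef
  have hw : ∀ (p : ℕ) (h : p < 2*(m+1) - 1), w p = v ⟨p, h⟩ := by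
    intro p h
    rw [hwdef]
    exact dif_pos h
  have hbound : ∀ i : Fin (2*(m+1)), (i:ℕ) ≤ 2*m+1 := fun i => by
    have := i.isLt; omega
  refine ⟨(Matrix.of fun i j : Fin (2*(m+1)) => LeN m w (i:ℕ) (j:ℕ))
      * (Matrix.of fun i j : Fin (2*(m+1)) => UeN m (i:ℕ) (j:ℕ)), ?_, ?_⟩
  · rw [Matrix.det_mul, detL (2*(m+1)) hN, detU (2*(m+1)) hN]
    simp
  · have hA : (Matrix.of fun i j : Fin (2 * (m+1)) =>
        if h : (i : ℕ) < 2 * (m+1) - 1 then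
          (if h' : (j : ℕ) < 2 * (m+1) - 1 then SmatE (i : ℕ) (j : ℕ) else v ⟨i, h⟩)
        else
          (if h' : (j : ℕ) < 2 * (m+1) - 1 then -(v ⟨j, h'⟩) else 0))
        = (Matrix.of fun i j : Fin (2*(m+1)) => AeN m w (i:ℕ) (j:ℕ)) := by
      ext i j
      simp only [Matrix.of_apply, AeN]
      by_cases hi : (i:ℕ) < 2*(m+1) - 1
      · rw [dif_pos hi, if_pos (by omega)]
        by_cases hj : (j:ℕ) < 2*(m+1) - 1
        · rw [dif_pos hj, if_pos (by omega)]
        · rw [dif_neg hj, if_neg (by omega), hw _ hi]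
      · rw [dif_neg hi, if_neg (by omega)]
        by_cases hj : (j:ℕ) < 2*(m+1) - 1
        · rw [dif_pos hj, if_pos (by omega), hw _ hj]
        · rw [dif_neg hj, if_neg (by omega)]
    rw [hA]
    have hC : (Matrix.of fun i j : Fin (2*(m+1)) => AeN m w (i:ℕ) (j:ℕ))
          * (Matrix.of fun i j : Fin (2*(m+1)) => UeN m (i:ℕ) (j:ℕ))ᵀ
        = (Matrix.of fun i j : Fin (2*(m+1)) => CeN m w (i:ℕ) (j:ℕ)) := by
      ext i j
      simp only [Matrix.mul_apply, Matrix.transpose_apply, Matrix.of_apply]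
      rw [Fin.sum_univ_eq_sum_range (fun q => AeN m w (i:ℕ) q * UeN m (j:ℕ) q) (2*(m+1)),
        show Finset.range (2*(m+1)) = Finset.range (2*m+2) from by rw [hN]]
      exact L1 _ _ (hbound i) (hbound j)
    have hM : (Matrix.of fun i j : Fin (2*(m+1)) => UeN m (i:ℕ) (j:ℕ))
          * (Matrix.of fun i j : Fin (2*(m+1)) => CeN m w (i:ℕ) (j:ℕ))
        = (Matrix.of fun i j : Fin (2*(m+1)) => MeN m w (i:ℕ) (j:ℕ)) := by
      ext i j
      simp only [Matrix.mul_apply, Matrix.of_apply]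
      rw [Fin.sum_univ_eq_sum_range (fun q => UeN m (i:ℕ) q * CeN m w q (j:ℕ)) (2*(m+1)),
        show Finset.range (2*(m+1)) = Finset.range (2*m+2) from by rw [hN]]
      exact L2 _ _ (hbound i) (hbound j)
    have hP : (Matrix.of fun i j : Fin (2*(m+1)) => MeN m w (i:ℕ) (j:ℕ))
          * (Matrix.of fun i j : Fin (2*(m+1)) => LeN m w (i:ℕ) (j:ℕ))ᵀ
        = (Matrix.of fun i j : Fin (2*(m+1)) => PeN m w (i:ℕ) (j:ℕ)) := by
      ext i j
      simp only [Matrix.mul_apply, Matrix.transpose_apply, Matrix.of_apply]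
      rw [Fin.sum_univ_eq_sum_range (fun q => MeN m w (i:ℕ) q * LeN m w (j:ℕ) q) (2*(m+1)),
        show Finset.range (2*(m+1)) = Finset.range (2*m+2) from by rw [hN]]
      exact L3 _ _ (hbound i) (hbound j)
    have hNn : (Matrix.of fun i j : Fin (2*(m+1)) => LeN m w (i:ℕ) (j:ℕ))
          * (Matrix.of fun i j : Fin (2*(m+1)) => PeN m w (i:ℕ) (j:ℕ))
        = (Matrix.of fun i j : Fin (2*(m+1)) => NeN m w (i:ℕ) (j:ℕ)) := by
      ext i j
      simp only [Matrix.mul_apply, Matrix.of_apply]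
      rw [Fin.sum_univ_eq_sum_range (fun q => LeN m w (i:ℕ) q * PeN m w q (j:ℕ)) (2*(m+1)),
        show Finset.range (2*(m+1)) = Finset.range (2*m+2) from by rw [hN]]
      exact L4 _ _ (hbound i) (hbound j)
    have hassoc : (Matrix.of fun i j : Fin (2*(m+1)) => LeN m w (i:ℕ) (j:ℕ))
          * (Matrix.of fun i j : Fin (2*(m+1)) => UeN m (i:ℕ) (j:ℕ))
          * (Matrix.of fun i j : Fin (2*(m+1)) => AeN m w (i:ℕ) (j:ℕ))
          * ((Matrix.of fun i j : Fin (2*(m+1)) => LeN m w (i:ℕ) (j:ℕ))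
            * (Matrix.of fun i j : Fin (2*(m+1)) => UeN m (i:ℕ) (j:ℕ)))ᵀ
        = (Matrix.of fun i j : Fin (2*(m+1)) => LeN m w (i:ℕ) (j:ℕ))
          * (((Matrix.of fun i j : Fin (2*(m+1)) => UeN m (i:ℕ) (j:ℕ))
            * ((Matrix.of fun i j : Fin (2*(m+1)) => AeN m w (i:ℕ) (j:ℕ))
              * (Matrix.of fun i j : Fin (2*(m+1)) => UeN m (i:ℕ) (j:ℕ))ᵀ))
            * (Matrix.of fun i j : Fin (2*(m+1)) => LeN m w (i:ℕ) (j:ℕ))ᵀ) := by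
      rw [Matrix.transpose_mul]
      simp only [Matrix.mul_assoc]
    rw [hassoc, hC, hM, hP, hNn]
    -- now : Dmat = Nmat
    have hS : (∑ p : Fin (2*(m+1) - 1), (-1:ℤ) ^ (p:ℕ) * v p) = Sw w 0 (2*m+1) := by
      have e : ∀ p : Fin (2*(m+1) - 1), (-1:ℤ)^(p:ℕ) * v p = (-1:ℤ)^(p:ℕ) * w (p:ℕ) := by
        intro p
        rw [hw _ p.isLt]
      rw [Finset.sum_congr rfl (fun p _ => e p),
        Fin.sum_univ_eq_sum_range (fun q => (-1:ℤ)^q * w q) (2*(m+1) - 1), hn,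
        Sw, ← Finset.range_eq_Ico]
    ext i j
    have hi2 : (i:ℕ) < 2*m+2 := hN ▸ i.isLt
    have hj2 : (j:ℕ) < 2*m+2 := hN ▸ j.isLt
    simp only [Dmat, Matrix.of_apply]
    rw [show (m+1) - 1 = m from rfl]
    by_cases c1 : (j:ℕ) = (i:ℕ)+1 ∧ (i:ℕ) % 2 = 0
    · rw [if_pos c1]
      rcases (by omega : (i:ℕ) < 2*m ∨ (i:ℕ) = 2*m) with h | h
      · rw [g1 m ((i:ℕ)/2) _ _ (by omega)]
        simp only [NeN]
        split_ifs <;> first | rfl | (exfalso; omega)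
      · rw [show (i:ℕ)/2 = m by omega, g2, hS]
        simp only [NeN]
        split_ifs <;> first | rfl | (exfalso; omega)
    · rw [if_neg c1]
      by_cases c2 : (i:ℕ) = (j:ℕ)+1 ∧ (j:ℕ) % 2 = 0
      · rw [if_pos c2]
        rcases (by omega : (j:ℕ) < 2*m ∨ (j:ℕ) = 2*m) with h | h
        · rw [g1 m ((j:ℕ)/2) _ _ (by omega)]
          simp only [NeN]
          split_ifs <;> first | rfl | ring1 | (exfalso; omega)
        · rw [show (j:ℕ)/2 = m by omega, g2, hS]
          simp only [NeN]
          split_ifs <;> first | rfl | ring1 | (exfalso; omega)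
      · rw [if_neg c2]
        simp only [NeN]
        split_ifs <;> first | rfl | (exfalso; omega)
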